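/- Monotonicity of persistence under the dual filter: let f be a signal over a finite connected graph G = (V,E), let 𝔗₀ be the BHT of (G, f) with respect to a (G,f)-ordering, and let 𝔗₁ be the BHT of (G, −f) with respect to a (G,−f)-ordering. Set g = −𝓛₀^ε(−f) computed via 𝔗₁. Then there exists a BHT 𝔗₀′ of (G, g) such that pers_{𝔗₀′}(u) ≤ pers_{𝔗₀}(u) for every vertex u, and moreover in 𝔗₀′ every strict ancestor w of a vertex u satisfies f(w) ≤ f(u). -/

import Mathlib

open scoped Classical

/-- A (multi)graph given by source and target maps on an edge type. -/
structure STGraph (V E : Type*) where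
  src : E → V
  tgt : E → V

namespace STGraph

variable {V E : Type*} (G : STGraph V E)

/-- `e` is an edge joining `x` and `y`. -/
def Ends (e : E) (x y : V) : Prop :=
  (G.src e = x ∧ G.tgt e = y) ∨ (G.src e = y ∧ G.tgt e = x)

/-- The graph is connected. -/
def Connected : Prop :=
  ∀ a b : V, Relation.ReflTransGen (fun x y => ∃ e, G.Ends e x y) a b

/-- Extension of a vertex signal to vertices and edges, `f(e) = max f(V(e))`. -/
def sig (f : V → ℝ) : V ⊕ E → ℝ
  | .inl v => f v
  | .inr e => max (f (G.src e)) (f (G.tgt e))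

/-- `pos` realizes a `G`-ordering: a total ordering of `V ⊕ E` along which the
signal is nondecreasing and every vertex precedes each edge incident to it. -/
def IsGOrdering (f : V → ℝ) (pos : V ⊕ E → ℕ) : Prop :=
  Function.Injective pos ∧
  (∀ a b, pos a ≤ pos b → G.sig f a ≤ G.sig f b) ∧
  (∀ e : E, pos (.inl (G.src e)) < pos (.inr e) ∧ pos (.inl (G.tgt e)) < pos (.inr e))

/-- Connectivity within the subgraph `G_{<k}` of elements with position `< k`. -/
def ConnB (pos : V ⊕ E → ℕ) (k : ℕ) (a b : V) : Prop :=
  pos (.inl a) < k ∧ pos (.inl b) < k ∧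
    Relation.ReflTransGen (fun x y => ∃ e, pos (.inr e) < k ∧ G.Ends e x y) a b

/-- `m` is the `≺`-minimum of the connected component of `v` in `G_{<k}`. -/
def IsCompMin (pos : V ⊕ E → ℕ) (k : ℕ) (m v : V) : Prop :=
  G.ConnB pos k m v ∧ ∀ w, G.ConnB pos k v w → pos (.inl m) ≤ pos (.inl w)

/-- The `≺`-maximal endpoint of an edge. -/
def maxEnd (pos : V ⊕ E → ℕ) (e : E) : V :=
  if pos (.inl (G.src e)) ≤ pos (.inl (G.tgt e)) then G.tgt e else G.src e

/-- `(p, L)` is a basin hierarchy tree of the signal `(G, f)` with respect to the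
`G`-ordering `pos`, rooted at the `≺`-minimal vertex `r`, with linking-vertex map `L`. -/
structure IsBHT (f : V → ℝ) (pos : V ⊕ E → ℕ) (r : V) (p : V → V) (L : V → V) : Prop where
  ordering : G.IsGOrdering f pos
  root_min : ∀ v, pos (.inl r) ≤ pos (.inl v)
  root_fix : p r = r
  reaches : ∀ v, ∃ n, p^[n] v = r
  spec : ∀ v, v ≠ r → ∃ e : E,
    G.IsCompMin pos (pos (.inr e)) v v ∧
    G.IsCompMin pos (pos (.inr e) + 1) (p v) v ∧
    L v = G.maxEnd pos e

end STGraph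

/-- `u` is an ancestor of `v` in the tree with parent map `p` (`u ⪯_T v`). -/
def Anc {V : Type*} (p : V → V) (u v : V) : Prop := ∃ n, p^[n] v = u

/-- `f(𝔏(v))`, with value `+∞` at the root. -/
noncomputable def fLink {V : Type*} (f : V → ℝ) (r : V) (L : V → V) (v : V) : EReal :=
  if v = r then ⊤ else (f (L v) : EReal)

/-- The persistence `pers(v) = f(𝔏(v)) - f(v)` of a vertex in a BHT. -/
noncomputable def persBHT {V : Type*} (f : V → ℝ) (r : V) (L : V → V) (v : V) : EReal :=
  fLink f r L v - (f v : EReal)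

namespace STGraph

variable {V E : Type*} (G : STGraph V E)

/-- The component of `v` dies at the edge `e`: `v` is the minimum of its component
just before `e` is added, and no longer after. -/
def DiesAt (pos : V ⊕ E → ℕ) (v : V) (e : E) : Prop :=
  G.IsCompMin pos (pos (.inr e)) v v ∧ ¬ G.IsCompMin pos (pos (.inr e) + 1) v v

/-- The death value of the component created by `v` (`+∞` if permanent). -/
noncomputable def deathVal (f : V → ℝ) (pos : V ⊕ E → ℕ) (v : V) : EReal :=
  if h : ∃ e, G.DiesAt pos v e then ((G.sig f (.inr h.choose) : ℝ) : EReal) else ⊤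

/-- The degree-0 persistence diagram of `(G, f)`, as a multiset of intervals
`[birth, death)` (including trivial intervals). -/
noncomputable def PD0 [Fintype V] (f : V → ℝ) (pos : V ⊕ E → ℕ) : Multiset (EReal × EReal) :=
  Finset.univ.val.map fun v : V => ((f v : EReal), G.deathVal f pos v)

end STGraph

/-- The nontrivial part of a multiset of intervals. -/
noncomputable def nontriv (M : Multiset (EReal × EReal)) : Multiset (EReal × EReal) :=
  M.filter fun ab => ab.1 < ab.2

/-- The 0-low-persistence filter associated to a BHT `(p, L)` rooted at `r`. -/
noncomputable def LPF {V : Type*} [Fintype V] (f : V → ℝ) (r : V) (p L : V → V)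
    (ε : ℝ) (v : V) : ℝ :=
  (insert (f v) ((Finset.univ.filter fun u => Anc p u v ∧ persBHT f r L u < (ε : EReal)).image
    fun u => f (L u))).max' (Finset.insert_nonempty _ _)

/-!
Order `V ⊕ E` by `g = −𝓛₀^ε(−f)`, breaking ties first by `f` and then by the ordering of `𝔗₀`,
and let `𝔗₀′` be the BHT this ordering induces; its root is the root of `𝔗₀`, since `g` only
takes values of `f` and `g ≤ f`. Persistence is read off paths: a non-root vertex dies at the
least `c` such that a path inside `{g ≤ c}` joins it to an earlier vertex.

If `g u = f u`, the path along which `u` merges into its `𝔗₀`-parent stays in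
`{f ≤ f(𝔏₀(u))} ⊆ {g ≤ f(𝔏₀(u))}`, so `u` dies no later than in `𝔗₀`. If `g u < f u`, then
`g u = f(𝔏₁(u'))` for a low-persistence ancestor `u'` of `u` in `𝔗₁`; the whole `𝔗₁`-subtree of
`u'` has `g ≤ g u`, and it joins `u` to `𝔏₁(u')`, a vertex with `f ≤ g u`. So `u` dies at once,
and it cannot be the `𝔗₀′`-parent of a vertex `y` with `g u < g y`: `𝔏₁(u')` would precede `u`
and be joined to `y` no later. With the tie-break by `f`, `f` therefore decreases towards the root
of `𝔗₀′`.
-/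

open Relation Sum Finset

noncomputable def rankBy {α β : Type*} [Fintype α] [LinearOrder β] (key : α → β) (a : α) : ℕ :=
  #{b | key b < key a}

section rankBy

variable {α β : Type*} [Fintype α] [LinearOrder β] {key : α → β} {a b : α}

theorem rankBy_le_rankBy (h : key a ≤ key b) : rankBy key a ≤ rankBy key b :=
  card_le_card (monotone_filter_right _ fun _ _ hc => hc.trans_le h)

theorem rankBy_lt_rankBy (h : key a < key b) : rankBy key a < rankBy key b := by
  refine card_lt_card ((ssubset_iff_of_subset
    (monotone_filter_right _ fun _ _ hc => hc.trans h)).2 ⟨a, ?_, ?_⟩) <;> simp [h]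

theorem rankBy_lt_rankBy_iff : rankBy key a < rankBy key b ↔ key a < key b :=
  ⟨fun h => lt_of_not_ge fun h' => (rankBy_le_rankBy h').not_gt h, rankBy_lt_rankBy⟩

theorem rankBy_injective (hkey : Function.Injective key) : Function.Injective (rankBy key) :=
  fun _ _ h => hkey <| le_antisymm
    (not_lt.1 fun h' => (rankBy_lt_rankBy h').ne' h)
    (not_lt.1 fun h' => (rankBy_lt_rankBy h').ne h)

end rankBy

theorem Anc.apply_le {V : Type*} {p : V → V} {φ : V → ℝ} (hstep : ∀ y, φ (p y) ≤ φ y)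
    {w u : V} (h : Anc p w u) : φ w ≤ φ u := by
  obtain ⟨n, rfl⟩ := h
  exact antitone_nat_of_succ_le (f := fun n => φ (p^[n] u))
    (fun n => by simp only [Function.iterate_succ_apply', hstep]) (Nat.zero_le n)

theorem Anc.trans {V : Type*} {p : V → V} {u v w : V} (hwu : Anc p w u) (huv : Anc p u v) :
    Anc p w v := by
  obtain ⟨n, rfl⟩ := huv
  obtain ⟨m, rfl⟩ := hwu
  exact ⟨m + n, Function.iterate_add_apply p m n v⟩

theorem exists_iterate_eq_of_lt {V : Type*} (μ : V → ℕ) {p : V → V} {r : V} (hr : p r = r)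
    (h : ∀ v, v ≠ r → μ (p v) < μ v) (v : V) : ∃ n, p^[n] v = r := by
  induction hμ : μ v using Nat.strong_induction_on generalizing v with
  | _ n ih =>
    rcases eq_or_ne v r with rfl | hv
    · exact ⟨0, rfl⟩
    obtain ⟨k, hk⟩ := ih _ (hμ ▸ h v hv) (p v) rfl
    exact ⟨k + 1, hk⟩

section persBHT

variable {V : Type*} (f : V → ℝ) (r : V) (L : V → V)

theorem persBHT_self : persBHT f r L r = ⊤ := by
  simp [persBHT, fLink]

theorem persBHT_of_ne {v : V} (hv : v ≠ r) : persBHT f r L v = ((f (L v) - f v : ℝ) : EReal) := by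
  simp [persBHT, fLink, hv, EReal.coe_sub]

end persBHT

section LPF

variable {V : Type*} [Fintype V] (f : V → ℝ) (r : V) (p L : V → V) (ε : ℝ)

theorem le_LPF (v : V) : f v ≤ LPF f r p L ε v :=
  le_max' _ _ (mem_insert_self _ _)

variable {f r p L ε} in
theorem apply_link_le_LPF {u v : V} (hanc : Anc p u v) (hpers : persBHT f r L u < ε) :
    f (L u) ≤ LPF f r p L ε v := by
  apply le_max'
  simp only [mem_insert, mem_image, mem_filter, mem_univ, true_and]
  exact Or.inr ⟨u, ⟨hanc, hpers⟩, rfl⟩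

theorem LPF_eq_or (v : V) : LPF f r p L ε v = f v ∨
    ∃ u, Anc p u v ∧ persBHT f r L u < ε ∧ LPF f r p L ε v = f (L u) := by
  have := max'_mem _ (insert_nonempty (f v)
    ((univ.filter fun u => Anc p u v ∧ persBHT f r L u < (ε : EReal)).image fun u => f (L u)))
  simp only [mem_insert, mem_image, mem_filter, mem_univ, true_and] at this
  obtain h | ⟨u, ⟨hanc, hpers⟩, hu⟩ := this
  · exact Or.inl h
  · exact Or.inr ⟨u, hanc, hpers, hu.symm⟩

noncomputable def dualLPF (v : V) : ℝ :=
  -LPF (-f) r p L ε v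

theorem dualLPF_le (v : V) : dualLPF f r p L ε v ≤ f v :=
  neg_le.2 (le_LPF (-f) r p L ε v)

variable {f r p L ε} in
theorem dualLPF_le_of_anc {u v : V} (hanc : Anc p u v) (hpers : persBHT (-f) r L u < ε) :
    dualLPF f r p L ε v ≤ f (L u) :=
  neg_le.2 (apply_link_le_LPF hanc hpers)

theorem dualLPF_eq_or (v : V) : dualLPF f r p L ε v = f v ∨
    ∃ u, Anc p u v ∧ persBHT (-f) r L u < ε ∧ dualLPF f r p L ε v = f (L u) := by
  rcases LPF_eq_or (-f) r p L ε v with h | ⟨u, hanc, hpers, h⟩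
  · exact Or.inl (by simp [dualLPF, h])
  · exact Or.inr ⟨u, hanc, hpers, by simp [dualLPF, h]⟩

theorem exists_dualLPF_eq (v : V) : ∃ x, dualLPF f r p L ε v = f x := by
  rcases dualLPF_eq_or f r p L ε v with h | ⟨u, -, -, h⟩
  exacts [⟨v, h⟩, ⟨L u, h⟩]

end LPF

namespace STGraph

variable {V E : Type*} (G : STGraph V E)

def PosAdj (pos : V ⊕ E → ℕ) (k : ℕ) (x y : V) : Prop :=
  ∃ e, pos (.inr e) < k ∧ G.Ends e x y

def JoinedIn (S : Set V) : V → V → Prop :=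
  ReflTransGen fun x y => ∃ e, G.Ends e x y ∧ x ∈ S ∧ y ∈ S

variable {G} {f : V → ℝ} {pos : V ⊕ E → ℕ} {r : V} {p L : V → V}

theorem Ends.symm {e : E} {x y : V} (h : G.Ends e x y) : G.Ends e y x := Or.symm h

theorem sig_inr_of_ends {e : E} {x y : V} (h : G.Ends e x y) :
    G.sig f (inr e) = max (f x) (f y) := by
  rcases h with ⟨rfl, rfl⟩ | ⟨rfl, rfl⟩
  exacts [rfl, max_comm _ _]

theorem ends_of_ne {e : E} {x y : V} (hx : x = G.src e ∨ x = G.tgt e)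
    (hy : y = G.src e ∨ y = G.tgt e) (hxy : x ≠ y) : G.Ends e x y := by
  rcases hx with rfl | rfl <;> rcases hy with rfl | rfl <;> simp_all [Ends]

theorem maxEnd_eq_or (e : E) : G.maxEnd pos e = G.src e ∨ G.maxEnd pos e = G.tgt e := by
  unfold maxEnd; split_ifs <;> simp

namespace JoinedIn

variable {S T : Set V} {a b c : V}

theorem mono (h : G.JoinedIn S a b) (hST : S ⊆ T) : G.JoinedIn T a b :=
  ReflTransGen.mono (fun _ _ ⟨e, he, hx, hy⟩ => ⟨e, he, hST hx, hST hy⟩) _ _ h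

theorem trans (hab : G.JoinedIn S a b) (hbc : G.JoinedIn S b c) : G.JoinedIn S a c :=
  ReflTransGen.trans hab hbc

theorem single {e : E} (he : G.Ends e a b) (ha : a ∈ S) (hb : b ∈ S) : G.JoinedIn S a b :=
  ReflTransGen.single ⟨e, he, ha, hb⟩

theorem mem_left (h : G.JoinedIn S a b) (hab : a ≠ b) : a ∈ S := by
  obtain rfl | ⟨_, ⟨_, _, ha, _⟩, _⟩ := h.cases_head
  exacts [absurd rfl hab, ha]

end JoinedIn

namespace IsGOrdering

variable (ho : G.IsGOrdering f pos)
include ho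

theorem pos_lt_of_ends {e : E} {x y : V} (h : G.Ends e x y) : pos (inl x) < pos (inr e) := by
  rcases h with ⟨rfl, -⟩ | ⟨-, rfl⟩
  exacts [(ho.2.2 e).1, (ho.2.2 e).2]

theorem pos_lt_of_sig_lt {a b : V ⊕ E} (h : G.sig f a < G.sig f b) : pos a < pos b :=
  lt_of_not_ge fun h' => (ho.2.1 _ _ h').not_gt h

theorem sig_maxEnd (e : E) : f (G.maxEnd pos e) = G.sig f (inr e) := by
  unfold maxEnd
  split_ifs with h
  · exact (max_eq_right (ho.2.1 _ _ h)).symm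
  · exact (max_eq_left (ho.2.1 _ _ (le_of_not_ge h))).symm

theorem pos_lt_of_reflTransGen {k : ℕ} {a b : V} (h : ReflTransGen (G.PosAdj pos k) a b)
    (ha : pos (inl a) < k) : pos (inl b) < k := by
  induction h with
  | refl => exact ha
  | tail _ hxy _ =>
    obtain ⟨e, hek, he⟩ := hxy
    exact (ho.pos_lt_of_ends he.symm).trans hek

end IsGOrdering

section ConnB

variable {k : ℕ} {a b c m : V}

theorem connB_refl (h : pos (inl a) < k) : G.ConnB pos k a a :=
  ⟨h, h, ReflTransGen.refl⟩

theorem ConnB.symm (h : G.ConnB pos k a b) : G.ConnB pos k b a :=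
  ⟨h.2.1, h.1, ReflTransGen.mono (fun _ _ ⟨e, hek, he⟩ => ⟨e, hek, he.symm⟩) _ _
    (ReflTransGen.swap _ _ h.2.2)⟩

theorem ConnB.trans (hab : G.ConnB pos k a b) (hbc : G.ConnB pos k b c) : G.ConnB pos k a c :=
  ⟨hab.1, hbc.2.1, hab.2.2.trans hbc.2.2⟩

theorem ConnB.mono {k' : ℕ} (hk : k ≤ k') (h : G.ConnB pos k a b) : G.ConnB pos k' a b :=
  ⟨h.1.trans_le hk, h.2.1.trans_le hk,
    ReflTransGen.mono (fun _ _ ⟨e, he, hE⟩ => ⟨e, he.trans_le hk, hE⟩) _ _ h.2.2⟩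

theorem IsCompMin.of_connB (h : G.IsCompMin pos k m a) (hab : G.ConnB pos k a b) :
    G.IsCompMin pos k m b :=
  ⟨h.1.trans hab, fun w hw => h.2 w (hab.trans hw)⟩

theorem exists_isCompMin (h : pos (inl a) < k) : ∃ m, G.IsCompMin pos k m a := by
  have hex : ∃ n, ∃ w, G.ConnB pos k a w ∧ pos (inl w) = n := ⟨_, a, connB_refl h, rfl⟩
  obtain ⟨m, hm, hmn⟩ := Nat.find_spec hex
  exact ⟨m, hm.symm, fun w hw => hmn ▸ Nat.find_min' hex ⟨w, hw, rfl⟩⟩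

theorem Connected.exists_connB (hG : G.Connected) (pos : V ⊕ E → ℕ) (a b : V) :
    ∃ k, G.ConnB pos k a b := by
  induction hG a b with
  | refl => exact ⟨_, connB_refl (Nat.lt_succ_self _)⟩
  | @tail x y _ hxy ih =>
    obtain ⟨e, he⟩ := hxy
    obtain ⟨k, hk⟩ := ih
    have hk' := hk.mono (k' := k + pos (inr e) + pos (inl y) + 1) (by omega)
    exact ⟨_, hk'.1, by omega, hk'.2.2.tail ⟨e, by omega, he⟩⟩

theorem reflTransGen_posAdj_succ (h : ReflTransGen (G.PosAdj pos (k + 1)) a b) :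
    ReflTransGen (G.PosAdj pos k) a b ∨ ∃ e, pos (inr e) = k ∧
      (ReflTransGen (G.PosAdj pos k) a (G.src e) ∨ ReflTransGen (G.PosAdj pos k) a (G.tgt e)) := by
  induction h with
  | refl => exact Or.inl ReflTransGen.refl
  | @tail x y _ hxy ih =>
    obtain ⟨e, hek, he⟩ := hxy
    rcases ih with hax | hend
    · rcases Nat.lt_succ_iff_lt_or_eq.1 hek with hek | rfl
      · exact Or.inl (hax.tail ⟨e, hek, he⟩)
      · rcases he with ⟨rfl, -⟩ | ⟨-, rfl⟩
        exacts [Or.inr ⟨e, rfl, Or.inl hax⟩, Or.inr ⟨e, rfl, Or.inr hax⟩]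
    · exact Or.inr hend

theorem IsGOrdering.isCompMin_succ (ho : G.IsGOrdering f pos) (hk : ∀ e, pos (inr e) ≠ k)
    (ha : pos (inl a) < k) (h : G.IsCompMin pos k a a) : G.IsCompMin pos (k + 1) a a := by
  refine ⟨connB_refl (ha.trans k.lt_succ_self), fun w hw => h.2 w ?_⟩
  obtain hpath | ⟨e, he, -⟩ := reflTransGen_posAdj_succ hw.2.2
  · exact ⟨ha, ho.pos_lt_of_reflTransGen hpath ha, hpath⟩
  · exact absurd he (hk e)

theorem IsGOrdering.isCompMin_pos_succ (ho : G.IsGOrdering f pos) (a : V) :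
    G.IsCompMin pos (pos (inl a) + 1) a a := by
  refine ⟨connB_refl (Nat.lt_succ_self _), fun w hw => ?_⟩
  obtain rfl | ⟨_, ⟨e, hek, he⟩, -⟩ := hw.2.2.cases_head
  · exact le_rfl
  · exact absurd hek (by have := ho.pos_lt_of_ends he; omega)

theorem IsGOrdering.joinedIn_of_connB (ho : G.IsGOrdering f pos) (h : G.ConnB pos k a b) :
    G.JoinedIn {x | G.ConnB pos k a x} a b := by
  suffices ∀ b, ReflTransGen (G.PosAdj pos k) a b → G.ConnB pos k a b ∧
      G.JoinedIn {x | G.ConnB pos k a x} a b from (this b h.2.2).2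
  intro b hab
  induction hab with
  | refl => exact ⟨connB_refl h.1, ReflTransGen.refl⟩
  | @tail x y _ hxy ih =>
    obtain ⟨e, hek, he⟩ := hxy
    have hy : G.ConnB pos k a y :=
      ⟨h.1, (ho.pos_lt_of_ends he.symm).trans hek, ih.1.2.2.tail ⟨e, hek, he⟩⟩
    exact ⟨hy, ih.2.tail ⟨e, he, ih.1, hy⟩⟩

theorem IsGOrdering.connB_of_joinedIn (ho : G.IsGOrdering f pos) {c : ℝ} {e : E}
    (h : G.JoinedIn {x | f x ≤ c} a b) (ha : f a ≤ c) (hc : c < G.sig f (inr e)) :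
    G.ConnB pos (pos (inr e)) a b := by
  have hpath : ReflTransGen (G.PosAdj pos (pos (inr e))) a b :=
    ReflTransGen.mono (fun _ _ ⟨e', he', hx, hy⟩ => ⟨e', ho.pos_lt_of_sig_lt
      (by rw [sig_inr_of_ends he']; exact (max_le hx hy).trans_lt hc), he'⟩) _ _ h
  have ha' : pos (inl a) < pos (inr e) := ho.pos_lt_of_sig_lt (ha.trans_lt hc)
  exact ⟨ha', ho.pos_lt_of_reflTransGen hpath ha', hpath⟩

end ConnB

theorem IsGOrdering.exists_diesAt (ho : G.IsGOrdering f pos) (hG : G.Connected)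
    (hr : ∀ v, pos (inl r) ≤ pos (inl v)) {v : V} (hv : v ≠ r) : ∃ e, G.DiesAt pos v e := by
  obtain ⟨N, hN⟩ := hG.exists_connB pos v r
  have hex : ∃ k, pos (inl v) < k ∧ ¬ G.IsCompMin pos k v v :=
    ⟨N, hN.1, fun hmin => hv (inl_injective (ho.1 (le_antisymm (hmin.2 r hN) (hr v))))⟩
  obtain ⟨hvk₀, hk₀⟩ := Nat.find_spec hex
  obtain ⟨k, hk⟩ : ∃ k, Nat.find hex = k + 1 := Nat.exists_eq_succ_of_ne_zero (by omega)
  rw [hk] at hvk₀ hk₀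
  have hvk : pos (inl v) < k := by
    refine lt_of_le_of_ne (Nat.lt_succ_iff.1 hvk₀) fun h => hk₀ ?_
    rw [← h]
    exact ho.isCompMin_pos_succ v
  have hmin : G.IsCompMin pos k v v := by
    by_contra h
    exact Nat.find_min hex (by omega) ⟨hvk, h⟩
  by_cases hedge : ∃ e, pos (inr e) = k
  · obtain ⟨e, rfl⟩ := hedge
    exact ⟨e, hmin, hk₀⟩
  · exact absurd (ho.isCompMin_succ (fun e he => hedge ⟨e, he⟩) hvk hmin) hk₀

theorem IsGOrdering.exists_isBHT (ho : G.IsGOrdering f pos) (hG : G.Connected)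
    (hr : ∀ v, pos (inl r) ≤ pos (inl v)) : ∃ p L, G.IsBHT f pos r p L := by
  have hpl : ∀ v, ∃ q l : V, (v = r → q = r) ∧ (v ≠ r → pos (inl q) < pos (inl v) ∧
      ∃ e, G.IsCompMin pos (pos (inr e)) v v ∧ G.IsCompMin pos (pos (inr e) + 1) q v ∧
        l = G.maxEnd pos e) := by
    intro v
    rcases eq_or_ne v r with rfl | hv
    · exact ⟨v, v, fun _ => rfl, fun h => absurd rfl h⟩
    obtain ⟨e, hself, hnot⟩ := ho.exists_diesAt hG hr hv
    obtain ⟨q, hq⟩ := exists_isCompMin (hself.1.1.trans (Nat.lt_succ_self _))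
    have hqv : q ≠ v := by
      rintro rfl
      exact hnot hq
    refine ⟨q, G.maxEnd pos e, fun h => absurd h hv, fun _ => ⟨?_, e, hself, hq, rfl⟩⟩
    exact lt_of_le_of_ne (hq.2 v (connB_refl hq.1.2.1)) fun h => hqv (inl_injective (ho.1 h))
  choose p L hroot hspec using hpl
  exact ⟨p, L, ho, hr, hroot r rfl, exists_iterate_eq_of_lt (fun v => pos (inl v)) (hroot r rfl)
    fun v hv => (hspec v hv).1, fun v hv => (hspec v hv).2⟩

namespace IsBHT

variable (hb : G.IsBHT f pos r p L)
include hb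

theorem pos_parent_lt {v : V} (hv : v ≠ r) : pos (inl (p v)) < pos (inl v) := by
  obtain ⟨e, -, hB, -⟩ := hb.spec v hv
  refine lt_of_le_of_ne (hB.2 v (connB_refl hB.1.2.1)) fun h => hv ?_
  obtain ⟨n, hn⟩ := hb.reaches v
  rwa [Function.iterate_fixed (inl_injective (hb.ordering.1 h)) n] at hn

theorem apply_root_le (v : V) : f r ≤ f v :=
  hb.ordering.2.1 _ _ (hb.root_min v)

theorem le_link {v : V} (hv : v ≠ r) : f v ≤ f (L v) := by
  obtain ⟨e, hA, -, hL⟩ := hb.spec v hv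
  rw [hL, hb.ordering.sig_maxEnd]
  exact hb.ordering.2.1 _ _ hA.1.1.le

theorem anc_of_isCompMin {k : ℕ} {m a : V} (h : G.IsCompMin pos k m a) : Anc p m a := by
  induction ha : pos (inl a) using Nat.strong_induction_on generalizing a with
  | _ n ih =>
    obtain rfl | hma := eq_or_ne m a
    · exact ⟨0, rfl⟩
    have hlt : pos (inl m) < pos (inl a) := lt_of_le_of_ne (h.2 a (connB_refl h.1.2.1))
      fun h' => hma (inl_injective (hb.ordering.1 h'))
    have har : a ≠ r := by
      rintro rfl
      exact (hb.root_min m).not_gt hlt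
    obtain ⟨e, hA, hB, -⟩ := hb.spec a har
    have hk : pos (inr e) < k := lt_of_not_ge fun hk => (hA.2 m (h.1.symm.mono hk)).not_gt hlt
    exact (ih _ (ha ▸ hb.pos_parent_lt har) (h.of_connB (hB.1.symm.mono hk)) rfl).trans ⟨1, rfl⟩

theorem joinedIn_anc_of_isCompMin {k : ℕ} {m a b : V} (hm : G.IsCompMin pos k m a)
    (hab : G.ConnB pos k a b) : G.JoinedIn {x | Anc p m x} a b :=
  (hb.ordering.joinedIn_of_connB hab).mono fun _ hx => hb.anc_of_isCompMin (hm.of_connB hx)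

theorem joinedIn_of_anc {u a : V} (ha : Anc p u a) : G.JoinedIn {x | Anc p u x} a u := by
  obtain ⟨n, rfl⟩ := ha
  induction n generalizing a with
  | zero => exact ReflTransGen.refl
  | succ n ih =>
    refine JoinedIn.trans ?_ (ih (a := p a))
    rcases eq_or_ne a r with rfl | har
    · rw [hb.root_fix]
      exact ReflTransGen.refl
    obtain ⟨e, -, hB, -⟩ := hb.spec a har
    exact (hb.joinedIn_anc_of_isCompMin hB hB.1.symm).mono fun _ hx => Anc.trans ⟨n, rfl⟩ hx

theorem joinedIn_self_link {u : V} (hu : u ≠ r) :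
    G.JoinedIn {x | Anc p u x ∨ x = L u} u (L u) := by
  obtain ⟨e, hA, hB, hL⟩ := hb.spec u hu
  have hpu := hb.pos_parent_lt hu
  have hsub : {x | Anc p u x} ⊆ {x | Anc p u x ∨ x = L u} := fun _ hx => Or.inl hx
  -- The path from `u` to its parent cannot stay below `e`, where `u` is still minimal.
  obtain ⟨z, hz, hconn⟩ : ∃ z, (z = G.src e ∨ z = G.tgt e) ∧ G.ConnB pos (pos (inr e)) u z := by
    rcases reflTransGen_posAdj_succ hB.1.symm.2.2 with hpath | ⟨e', he', hend⟩
    · exact absurd (hA.2 _ ⟨hA.1.1, hpu.trans hA.1.1, hpath⟩) (not_le.2 hpu)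
    · obtain rfl := inr_injective (hb.ordering.1 he')
      rcases hend with h | h
      exacts [⟨_, Or.inl rfl, hA.1.1, (hb.ordering.2.2 e').1, h⟩,
        ⟨_, Or.inr rfl, hA.1.1, (hb.ordering.2.2 e').2, h⟩]
  have hzu := (hb.joinedIn_anc_of_isCompMin hA hconn).mono hsub
  rcases eq_or_ne z (L u) with rfl | hzL
  · exact hzu
  have hLe : L u = G.src e ∨ L u = G.tgt e := by
    rw [hL]
    exact maxEnd_eq_or e
  exact hzu.trans (JoinedIn.single (ends_of_ne hz hLe hzL)
    (hsub (hb.anc_of_isCompMin (hA.of_connB hconn))) (Or.inr rfl))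

theorem link_le_of_joinedIn {v w : V} {c : ℝ} (hv : v ≠ r) (h : G.JoinedIn {x | f x ≤ c} v w)
    (hw : pos (inl w) < pos (inl v)) : f (L v) ≤ c := by
  obtain ⟨e, hA, -, hL⟩ := hb.spec v hv
  rw [hL, hb.ordering.sig_maxEnd]
  by_contra! hc
  have hvw : v ≠ w := by
    rintro rfl
    exact lt_irrefl _ hw
  exact (hA.2 w (hb.ordering.connB_of_joinedIn h (h.mem_left hvw) hc)).not_gt hw

theorem joinedIn_parent {v : V} (hv : v ≠ r) : G.JoinedIn {x | f x ≤ f (L v)} v (p v) := by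
  obtain ⟨e, -, hB, hL⟩ := hb.spec v hv
  refine (hb.ordering.joinedIn_of_connB hB.1.symm).mono fun x hx => ?_
  rw [Set.mem_ofPred_eq, hL, hb.ordering.sig_maxEnd]
  exact hb.ordering.2.1 _ _ (Nat.lt_succ_iff.1 hx.2.1)

end IsBHT

theorem IsBHT.exists_joinedIn_of_dualLPF_lt [Fintype V] (hb : G.IsBHT (-f) pos r p L) {ε : ℝ}
    {u : V} (hu : dualLPF f r p L ε u < f u) : ∃ w, f w ≤ dualLPF f r p L ε u ∧
      G.JoinedIn {x | dualLPF f r p L ε x ≤ dualLPF f r p L ε u} u w := by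
  obtain hfu | ⟨u', hanc, hpers, hgu⟩ := dualLPF_eq_or f r p L ε u
  · exact absurd hfu hu.ne
  have hu' : u' ≠ r := by
    rintro rfl
    simp [persBHT_self] at hpers
  have hsub : {x | Anc p u' x ∨ x = L u'} ⊆
      {x | dualLPF f r p L ε x ≤ dualLPF f r p L ε u} := by
    rintro x (hx | rfl) <;> rw [Set.mem_ofPred_eq, hgu]
    exacts [dualLPF_le_of_anc hx hpers, dualLPF_le f r p L ε _]
  exact ⟨L u', hgu.ge, ((((hb.joinedIn_of_anc hanc).mono fun _ hx => Or.inl hx).trans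
    (hb.joinedIn_self_link hu')).mono hsub)⟩

section refinedPos

variable [Fintype V] [Fintype E] {g : V → ℝ} {pos₀ : V ⊕ E → ℕ}

variable (G) in
noncomputable def refinedPos (g f : V → ℝ) (pos₀ : V ⊕ E → ℕ) : V ⊕ E → ℕ :=
  rankBy fun a => toLex (G.sig g a, toLex (G.sig f a, pos₀ a))

theorem refinedPos_lt_iff {a b : V ⊕ E} :
    G.refinedPos g f pos₀ a < G.refinedPos g f pos₀ b ↔ G.sig g a < G.sig g b ∨
      G.sig g a = G.sig g b ∧
        (G.sig f a < G.sig f b ∨ G.sig f a = G.sig f b ∧ pos₀ a < pos₀ b) := by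
  simp only [refinedPos, rankBy_lt_rankBy_iff, Prod.Lex.toLex_lt_toLex]

theorem refinedPos_lt_of_le {a b : V ⊕ E} (hg : G.sig g a ≤ G.sig g b)
    (hf : G.sig f a ≤ G.sig f b) (hpos : pos₀ a < pos₀ b) :
    G.refinedPos g f pos₀ a < G.refinedPos g f pos₀ b := by
  rw [refinedPos_lt_iff]
  rcases hg.lt_or_eq with hg | hg
  · exact Or.inl hg
  rcases hf.lt_or_eq with hf | hf
  exacts [Or.inr ⟨hg, Or.inl hf⟩, Or.inr ⟨hg, Or.inr ⟨hf, hpos⟩⟩]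

theorem IsGOrdering.refinedPos (ho₀ : G.IsGOrdering f pos₀) :
    G.IsGOrdering g (G.refinedPos g f pos₀) := by
  refine ⟨rankBy_injective fun _ _ h => ho₀.1 (congrArg (fun x => (ofLex (ofLex x).2).2) h),
    fun a b hab => ?_, fun e => ⟨?_, ?_⟩⟩
  · by_contra! h
    exact hab.not_gt (refinedPos_lt_iff.2 (Or.inl h))
  · exact refinedPos_lt_of_le (le_max_left _ _) (le_max_left _ _) (ho₀.2.2 e).1
  · exact refinedPos_lt_of_le (le_max_right _ _) (le_max_right _ _) (ho₀.2.2 e).2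

theorem IsBHT.refinedPos_root_le (hb₀ : G.IsBHT f pos₀ r p L) (hgf : ∀ v, g v ≤ f v)
    (hgr : ∀ v, f r ≤ g v) (v : V) :
    G.refinedPos g f pos₀ (inl r) ≤ G.refinedPos g f pos₀ (inl v) := by
  rcases eq_or_ne v r with rfl | hv
  · exact le_rfl
  refine (refinedPos_lt_of_le (G := G) (a := inl r) (b := inl v) ((hgf r).trans (hgr v))
    (hb₀.apply_root_le v) ?_).le
  exact lt_of_le_of_ne (hb₀.root_min v) fun h => hv (inl_injective (hb₀.ordering.1 h)).symm

section drain

variable {p₀ L₀ : V → V} (hgf : ∀ v, g v ≤ f v)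
  (hdrain : ∀ u, g u < f u → ∃ w, f w ≤ g u ∧ G.JoinedIn {x | g x ≤ g u} u w)
include hgf hdrain

theorem IsBHT.persBHT_le_of_refinedPos (hb : G.IsBHT g (G.refinedPos g f pos₀) r p L)
    (hb₀ : G.IsBHT f pos₀ r p₀ L₀) (u : V) :
    persBHT g r L u ≤ persBHT f r L₀ u := by
  rcases eq_or_ne u r with rfl | hu
  · simp [persBHT_self]
  rw [persBHT_of_ne _ _ _ hu, persBHT_of_ne _ _ _ hu, EReal.coe_le_coe_iff]
  rcases (hgf u).lt_or_eq with hlt | heq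
  · obtain ⟨w, hwu, hj⟩ := hdrain u hlt
    have hw : G.refinedPos g f pos₀ (inl w) < G.refinedPos g f pos₀ (inl u) := by
      rw [refinedPos_lt_iff]
      rcases ((hgf w).trans hwu).lt_or_eq with h | h
      exacts [Or.inl h, Or.inr ⟨h, Or.inl (hwu.trans_lt hlt)⟩]
    linarith [hb.link_le_of_joinedIn hu hj hw, hb₀.le_link hu]
  · have hpu := hb₀.pos_parent_lt hu
    have hfp : f (p₀ u) ≤ f u := hb₀.ordering.2.1 _ _ hpu.le
    have hw : G.refinedPos g f pos₀ (inl (p₀ u)) < G.refinedPos g f pos₀ (inl u) :=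
      refinedPos_lt_of_le (G := G) (a := inl (p₀ u)) (b := inl u)
        ((hgf _).trans (hfp.trans heq.ge)) hfp hpu
    have hj := (hb₀.joinedIn_parent hu).mono fun x hx => (hgf x).trans hx
    linarith [hb.link_le_of_joinedIn hu hj hw]

theorem IsBHT.apply_parent_le_of_refinedPos (hb : G.IsBHT g (G.refinedPos g f pos₀) r p L)
    (y : V) : f (p y) ≤ f y := by
  rcases eq_or_ne y r with rfl | hy
  · rw [hb.root_fix]
  obtain ⟨e, -, hB, hL⟩ := hb.spec y hy
  have hyL : g y ≤ G.sig g (inr e) := by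
    rw [← hb.ordering.sig_maxEnd, ← hL]
    exact hb.le_link hy
  have hqy := hb.pos_parent_lt hy
  rw [refinedPos_lt_iff] at hqy
  rcases hqy with hlt | ⟨-, hf | ⟨hf, -⟩⟩
  · rcases (hgf (p y)).lt_or_eq with hq | hq
    · -- `p y` drains to a vertex `w` that joins `y` before `e` yet precedes `p y`.
      exfalso
      obtain ⟨w, hwq, hj⟩ := hdrain _ hq
      have hyw : G.ConnB (G.refinedPos g f pos₀) (G.refinedPos g f pos₀ (inr e) + 1) y w :=
        hB.1.symm.trans ((hb.ordering.connB_of_joinedIn hj le_rfl (hlt.trans_le hyL)).mono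
          (Nat.le_succ _))
      refine (hB.2 w hyw).not_gt (refinedPos_lt_iff.2 ?_)
      rcases ((hgf w).trans hwq).lt_or_eq with h | h
      exacts [Or.inl h, Or.inr ⟨h, Or.inl (hwq.trans_lt hq)⟩]
    · exact (hq.symm.trans_lt hlt).le.trans (hgf y)
  exacts [hf.le, hf.le]

end drain

end refinedPos

end STGraph

theorem dual_lpf_pers_monotone_general {V E : Type*} [Fintype V] [Fintype E]
    (G : STGraph V E) (hG : G.Connected) (f : V → ℝ)
    (pos₀ : V ⊕ E → ℕ) (r₀ : V) (p₀ L₀ : V → V)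
    (hbht₀ : G.IsBHT f pos₀ r₀ p₀ L₀)
    (pos₁ : V ⊕ E → ℕ) (r₁ : V) (p₁ L₁ : V → V)
    (hbht₁ : G.IsBHT (-f) pos₁ r₁ p₁ L₁)
    (ε : ℝ)
    (g : V → ℝ) (hg : g = fun v => -(LPF (-f) r₁ p₁ L₁ ε v)) :
    ∃ (pos' : V ⊕ E → ℕ) (r' : V) (p' L' : V → V),
      G.IsBHT g pos' r' p' L' ∧
      (∀ u : V, persBHT g r' L' u ≤ persBHT f r₀ L₀ u) ∧
      (∀ u w : V, Anc p' w u → w ≠ u → f w ≤ f u) := by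
  replace hg : g = dualLPF f r₁ p₁ L₁ ε := hg
  subst hg
  have hgf := dualLPF_le f r₁ p₁ L₁ ε
  have hgr : ∀ v, f r₀ ≤ dualLPF f r₁ p₁ L₁ ε v := fun v => by
    obtain ⟨x, hx⟩ := exists_dualLPF_eq f r₁ p₁ L₁ ε v
    exact hx ▸ hbht₀.apply_root_le x
  have hdrain := fun u => hbht₁.exists_joinedIn_of_dualLPF_lt (ε := ε) (u := u)
  obtain ⟨p', L', hbht'⟩ :=
    hbht₀.ordering.refinedPos.exists_isBHT hG (hbht₀.refinedPos_root_le hgf hgr)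
  exact ⟨_, r₀, p', L', hbht', hbht'.persBHT_le_of_refinedPos hgf hdrain hbht₀,
    fun u w hwu _ => hwu.apply_le (hbht'.apply_parent_le_of_refinedPos hgf hdrain)⟩

/-- Monotonicity of 0-dimensional persistence under the dual low-persistence
filter: if `𝔗₀` is a BHT of `(G, f)` and `𝔗₁` a BHT of `(G, −f)`, and
`g = −𝓛₀^ε(−f)` is computed via `𝔗₁`, then there exists a `(G, g)`-ordering and a
BHT `𝔗₀′` of `(G, g)` such that `pers_{𝔗₀′}(u) ≤ pers_{𝔗₀}(u)` for every vertex
`u`, and in `𝔗₀′` every strict ancestor `w` of a vertex `u` satisfies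
`f(w) ≤ f(u)`. -/
theorem dual_lpf_pers_monotone {V E : Type*} [Fintype V] [Fintype E]
    (G : STGraph V E) (hG : G.Connected) (f : V → ℝ)
    (pos₀ : V ⊕ E → ℕ) (r₀ : V) (p₀ L₀ : V → V)
    (hbht₀ : G.IsBHT f pos₀ r₀ p₀ L₀)
    (pos₁ : V ⊕ E → ℕ) (r₁ : V) (p₁ L₁ : V → V)
    (hbht₁ : G.IsBHT (-f) pos₁ r₁ p₁ L₁)
    (ε : ℝ) (hε : 0 < ε)
    (g : V → ℝ) (hg : g = fun v => -(LPF (-f) r₁ p₁ L₁ ε v)) :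
    ∃ (pos' : V ⊕ E → ℕ) (r' : V) (p' L' : V → V),
      G.IsBHT g pos' r' p' L' ∧
      (∀ u : V, persBHT g r' L' u ≤ persBHT f r₀ L₀ u) ∧
      (∀ u w : V, Anc p' w u → w ≠ u → f w ≤ f u) :=
  dual_lpf_pers_monotone_general G hG f pos₀ r₀ p₀ L₀ hbht₀ pos₁ r₁ p₁ L₁ hbht₁ ε g hg
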